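/- Let p be a prime and D̄ the image of the diagonal torus of SL(p,ℂ) in PSL(p,ℂ), regarded as a module over the cyclic group ⟨M̄_c⟩ ≅ ℤ/p acting by conjugation. Then the trace map T : D̄ → D̄, d̄ ↦ d̄·(M̄_c · d̄)⁻¹ is surjective, and consequently H¹(⟨M̄_c⟩, D̄) is trivial. -/

import Mathlib

open Matrix

/-- `PSL(p, ℂ)` as the quotient of `SL(p, ℂ)` by its center. -/
abbrev PSL (p : ℕ) [Fact p.Prime] : Type :=
  Matrix.SpecialLinearGroup (ZMod p) ℂ ⧸ Subgroup.center (Matrix.SpecialLinearGroup (ZMod p) ℂ)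

/-- The natural projection `π : SL(p,ℂ) → PSL(p,ℂ)`. -/
abbrev projPSL (p : ℕ) [Fact p.Prime] :
    Matrix.SpecialLinearGroup (ZMod p) ℂ →* PSL p :=
  QuotientGroup.mk' _

/-- `D̄`, the image in `PSL(p,ℂ)` of the subgroup of diagonal matrices of `SL(p,ℂ)`. -/
noncomputable def DbarSub (p : ℕ) [Fact p.Prime] : Subgroup (PSL p) :=
  Subgroup.map (projPSL p)
    (Subgroup.closure {x : Matrix.SpecialLinearGroup (ZMod p) ℂ |
      (x : Matrix (ZMod p) (ZMod p) ℂ).IsDiag})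

/-!
A diagonal `d = diag(dᵢ)` of determinant one equals `b (M b M⁻¹)⁻¹` for the diagonal `b` as soon
as `b_{i+1} = d_{i+1} bᵢ` for all `i ∈ ℤ/p`, since conjugation by `M = c • shift` moves the diagonal
entries one step. The partial products `bᵢ = d₁ ⋯ dᵢ` solve this recursion, which closes up
because `∏ dᵢ = 1`, and rescaling `b` by a `p`-th root of `(∏ bᵢ)⁻¹` puts it in `SL(p, ℂ)`.

For `H¹`: if `z` is a cocycle of a subgroup `H` acting by conjugation, then `x ↦ z x * x` is a
homomorphism, and for the coboundary of `b` it is conjugation by `b`. On the cyclic group `⟨M̄⟩`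
two homomorphisms agreeing on the generator agree, so `z` is the coboundary of any `b` whose
trace is `z M̄`.
-/

theorem ZMod.prod_range_natCast {M : Type*} [CommMonoid M] (n : ℕ) [NeZero n] (f : ZMod n → M) :
    ∏ k ∈ Finset.range n, f k = ∏ i, f i :=
  Finset.prod_bij' (fun k _ => (k : ZMod n)) (fun i _ => i.val) (by simp)
    (fun i _ => Finset.mem_range.2 i.val_lt)
    (fun k hk => ZMod.val_cast_of_lt (Finset.mem_range.1 hk))
    (fun i _ => ZMod.natCast_zmod_val i) (fun _ _ => rfl)

theorem ZMod.exists_mul_succ_eq_of_prod_eq_one {M : Type*} [CommMonoid M] {n : ℕ} [NeZero n]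
    {f : ZMod n → M} (hf : ∏ i, f i = 1) :
    ∃ g : ZMod n → M, (∀ j, IsUnit (g j)) ∧ ∀ j, g (j + 1) = f (j + 1) * g j := by
  have hunit (i : ZMod n) : IsUnit (f i) :=
    isUnit_of_dvd_one (hf ▸ Finset.dvd_prod_of_mem f (Finset.mem_univ i))
  refine ⟨fun j => ∏ k ∈ Finset.range j.val, f (k + 1),
    fun j => IsUnit.prod_iff.2 fun k _ => hunit _, fun j => ?_⟩
  have hsucc : j + 1 = ((j.val + 1 : ℕ) : ZMod n) := by push_cast [ZMod.natCast_zmod_val]; rfl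
  beta_reduce
  rcases (Nat.add_one_le_iff.2 j.val_lt).lt_or_eq with hlt | heq
  · rw [show (j + 1).val = j.val + 1 by rw [hsucc, ZMod.val_cast_of_lt hlt],
      Finset.prod_range_succ, ZMod.natCast_zmod_val, mul_comm]
  · have hzero : j + 1 = 0 := by rw [hsucc, heq, ZMod.natCast_self]
    rw [hzero, ZMod.val_zero, Finset.prod_range_zero, ← hf, ← ZMod.prod_range_natCast,
      show Finset.range n = Finset.range (j.val + 1) by rw [heq], Finset.prod_range_succ', mul_comm]
    simp only [Nat.cast_add, Nat.cast_one, Nat.cast_zero]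

def shiftMatrix (n : ℕ) (R : Type*) [Zero R] [One R] : Matrix (ZMod n) (ZMod n) R :=
  of fun i j => if i = j + 1 then 1 else 0

theorem diagonal_mul_shiftMatrix {R : Type*} [Semiring R] {n : ℕ} [NeZero n] {b d : ZMod n → R}
    (h : ∀ j, b (j + 1) = d (j + 1) * b j) :
    diagonal b * shiftMatrix n R = diagonal d * shiftMatrix n R * diagonal b := by
  ext i j
  rw [diagonal_mul, mul_diagonal, diagonal_mul]
  by_cases hij : i = j + 1 <;> simp [shiftMatrix, hij, h]

theorem exists_diagonal_prod_eq_one_mul_shiftMatrix {K : Type*} [Field K] [IsAlgClosed K]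
    {n : ℕ} [NeZero n] {d : ZMod n → K} (hd : ∏ i, d i = 1) :
    ∃ b : ZMod n → K, ∏ i, b i = 1 ∧
      diagonal b * shiftMatrix n K = diagonal d * shiftMatrix n K * diagonal b := by
  obtain ⟨g, hg_unit, hg⟩ := ZMod.exists_mul_succ_eq_of_prod_eq_one hd
  have hg_prod : ∏ i, g i ≠ 0 := (IsUnit.prod_univ_iff.2 hg_unit).ne_zero
  obtain ⟨t, ht⟩ := IsAlgClosed.exists_pow_nat_eq (∏ i, g i)⁻¹ (NeZero.pos n)
  refine ⟨fun i => t * g i, ?_, diagonal_mul_shiftMatrix fun j => ?_⟩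
  · rw [Finset.prod_mul_distrib, Finset.prod_const, Finset.card_univ, ZMod.card, ht,
      inv_mul_cancel₀ hg_prod]
  · rw [hg, mul_left_comm]

theorem Matrix.isDiag_of_mem_closure_isDiag {n R : Type*} [Fintype n] [DecidableEq n]
    [CommRing R] {x : SpecialLinearGroup n R}
    (hx : x ∈ Subgroup.closure {x : SpecialLinearGroup n R | (x : Matrix n n R).IsDiag}) :
    (x : Matrix n n R).IsDiag := by
  induction hx using Subgroup.closure_induction with
  | mem x hx => exact hx
  | one => exact isDiag_one
  | mul x y _ _ hx hy =>
    rw [SpecialLinearGroup.coe_mul, ← hx.diagonal_diag, ← hy.diagonal_diag, diagonal_mul_diagonal]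
    exact isDiag_diagonal _
  | inv x _ hx =>
    rw [SpecialLinearGroup.coe_inv, ← hx.diagonal_diag, adjugate_diagonal]
    exact isDiag_diagonal _

theorem Matrix.SpecialLinearGroup.exists_isDiag_mul_conj_inv_eq {K : Type*} [Field K]
    [IsAlgClosed K] {n : ℕ} [NeZero n] {M : SpecialLinearGroup (ZMod n) K}
    (hM : ∃ c : K, (M : Matrix (ZMod n) (ZMod n) K) = c • shiftMatrix n K)
    {x : SpecialLinearGroup (ZMod n) K} (hx : (x : Matrix (ZMod n) (ZMod n) K).IsDiag) :
    ∃ b : SpecialLinearGroup (ZMod n) K, (b : Matrix (ZMod n) (ZMod n) K).IsDiag ∧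
      b * (M * b * M⁻¹)⁻¹ = x := by
  obtain ⟨c, hc⟩ := hM
  have hx_eq : (x : Matrix (ZMod n) (ZMod n) K) = diagonal x.1.diag := hx.diagonal_diag.symm
  have hx_det : ∏ i, x.1.diag i = 1 := by rw [← det_diagonal, ← hx_eq, x.2]
  obtain ⟨b, hb_det, hb⟩ := exists_diagonal_prod_eq_one_mul_shiftMatrix hx_det
  let b' : SpecialLinearGroup (ZMod n) K := ⟨diagonal b, by rw [det_diagonal, hb_det]⟩
  have hcomm : b' * M = x * M * b' := by
    refine Subtype.ext ?_
    change diagonal b * (M : Matrix (ZMod n) (ZMod n) K) = x * M * diagonal b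
    rw [hc, mul_smul_comm, mul_smul_comm, smul_mul_assoc, hb, ← hx_eq]
  refine ⟨b', isDiag_diagonal b, ?_⟩
  calc b' * (M * b' * M⁻¹)⁻¹ = b' * M * b'⁻¹ * M⁻¹ := by group
    _ = x := by rw [hcomm]; group

theorem trace_surjective (p : ℕ) [Fact p.Prime] {Mm : Matrix.SpecialLinearGroup (ZMod p) ℂ}
    (hM : ∃ c : ℂ, (Mm : Matrix (ZMod p) (ZMod p) ℂ) = c • shiftMatrix p ℂ) :
    ∀ c ∈ DbarSub p, ∃ b ∈ DbarSub p, b * (projPSL p Mm * b * (projPSL p Mm)⁻¹)⁻¹ = c := by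
  rintro _ ⟨x, hx, rfl⟩
  obtain ⟨b, hb, hbx⟩ :=
    SpecialLinearGroup.exists_isDiag_mul_conj_inv_eq hM (isDiag_of_mem_closure_isDiag hx)
  exact ⟨projPSL p b, ⟨b, Subgroup.subset_closure hb, rfl⟩, by simp [← hbx]⟩

section ConjCocycle

variable {G : Type*} [Group G] {H : Subgroup G}

def IsConjCocycle (z : H → G) : Prop :=
  ∀ x y, z (x * y) = z x * (x * z y * (x : G)⁻¹)

def IsConjCocycle.mulSelf {z : H → G} (hz : IsConjCocycle z) : H →* G :=
  MonoidHom.mk' (fun x => z x * x) fun x y => by simp only [hz x y, Subgroup.coe_mul]; group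

theorem IsConjCocycle.eq_coboundary_of_apply_generator {g : G} {z : Subgroup.zpowers g → G}
    (hz : IsConjCocycle z) {b : G} (hb : z ⟨g, Subgroup.mem_zpowers g⟩ = b * (g * b * g⁻¹)⁻¹)
    (x : Subgroup.zpowers g) : z x = b * (x * b * (x : G)⁻¹)⁻¹ := by
  have hom_eq : hz.mulSelf = (MulAut.conj b).toMonoidHom.comp (Subgroup.subtype _) := by
    ext x
    obtain ⟨k, hk⟩ := x.2
    obtain rfl : x = ⟨g, Subgroup.mem_zpowers g⟩ ^ k := Subtype.ext hk.symm
    simp only [map_zpow]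
    congr 1
    simp only [IsConjCocycle.mulSelf, MonoidHom.mk'_apply, hb, MonoidHom.coe_comp,
      MulEquiv.coe_toMonoidHom, Function.comp_apply, Subgroup.coe_subtype, MulAut.conj_apply]
    group
  have hx : z x * x = b * x * b⁻¹ := DFunLike.congr_fun hom_eq x
  rw [eq_mul_inv_of_mul_eq hx]
  group

end ConjCocycle

theorem trace_surjective_and_H1_trivial_general (p : ℕ) [Fact p.Prime]
    (Mm : Matrix.SpecialLinearGroup (ZMod p) ℂ)
    (hM : ∃ c : ℂ, (Mm : Matrix (ZMod p) (ZMod p) ℂ) =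
      c • Matrix.of fun i j : ZMod p => if i = j + 1 then (1 : ℂ) else 0) :
    (∀ c ∈ DbarSub p, ∃ b ∈ DbarSub p,
        b * (projPSL p Mm * b * (projPSL p Mm)⁻¹)⁻¹ = c) ∧
    (∀ z : ↥(Subgroup.zpowers (projPSL p Mm)) → PSL p,
        (∀ x, z x ∈ DbarSub p) →
        (∀ x y, z (x * y) = z x * ((x : PSL p) * z y * (x : PSL p)⁻¹)) →
        ∃ b ∈ DbarSub p, ∀ x, z x = b * ((x : PSL p) * b * (x : PSL p)⁻¹)⁻¹) := by
  refine ⟨trace_surjective p hM, fun z hzD hz => ?_⟩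
  obtain ⟨b, hb, hb_trace⟩ := trace_surjective p hM _ (hzD ⟨_, Subgroup.mem_zpowers _⟩)
  exact ⟨b, hb, IsConjCocycle.eq_coboundary_of_apply_generator hz hb_trace.symm⟩

/-- Let `p` be prime and `D̄ ≤ PSL(p,ℂ)` the image of the diagonal torus,
a module over `⟨M̄_c⟩ ≅ ℤ/p` acting by conjugation.  Then the trace map
`T : d̄ ↦ d̄·(M̄_c·d̄)⁻¹` is surjective on `D̄`, and consequently `H¹(⟨M̄_c⟩, D̄)` is trivial:
every (multiplicative) 1-cocycle `⟨M̄_c⟩ → D̄` is a 1-coboundary. -/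
theorem trace_surjective_and_H1_trivial (p : ℕ) [Fact p.Prime]
    (ξ : ℂ) (hξ : IsPrimitiveRoot ξ p)
    (Mm : Matrix.SpecialLinearGroup (ZMod p) ℂ)
    (hM : ∃ c : ℂ, (Mm : Matrix (ZMod p) (ZMod p) ℂ) =
      c • Matrix.of fun i j : ZMod p => if i = j + 1 then (1 : ℂ) else 0) :
    (∀ c ∈ DbarSub p, ∃ b ∈ DbarSub p,
        b * (projPSL p Mm * b * (projPSL p Mm)⁻¹)⁻¹ = c) ∧
    (∀ z : ↥(Subgroup.zpowers (projPSL p Mm)) → PSL p,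
        (∀ x, z x ∈ DbarSub p) →
        (∀ x y, z (x * y) = z x * ((x : PSL p) * z y * (x : PSL p)⁻¹)) →
        ∃ b ∈ DbarSub p, ∀ x, z x = b * ((x : PSL p) * b * (x : PSL p)⁻¹)⁻¹) :=
  trace_surjective_and_H1_trivial_general p Mm hM
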